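/- arXiv:1106.2377 — 4 statements merged into one kernel-verified Lean document; each statement's English description precedes it below -/
import Mathlib

section
/- Let U ⊆ (0,π)×(0,π) be open, let R₀ > 0, and set R := R₀ sin t sin θ. If S, ω : U → ℝ are smooth and ω satisfies the Gowdy equation (F2) (with coefficient function S) on U, then the integrability condition ∂ₜ(R e^{−2S} ∂ₜω) = ∂θ(R e^{−2S} ∂θω) holds on U; equivalently, the system ∂θQ = −R e^{−2S} ∂ₜω, ∂ₜQ = −R e^{−2S} ∂θω for an unknown Q is locally integrable. -/
noncomputable section

open Real Set

/-- Partial derivative with respect to the first (time) variable. -/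
def pt (f : ℝ → ℝ → ℝ) (t θ : ℝ) : ℝ := deriv (fun s => f s θ) t

/-- Partial derivative with respect to the second (angle) variable. -/
def pth (f : ℝ → ℝ → ℝ) (t θ : ℝ) : ℝ := deriv (fun x => f t x) θ

/-- The Fuchsian operator `D = t ∂ₜ`. -/
def Dt (f : ℝ → ℝ → ℝ) : ℝ → ℝ → ℝ := fun t θ => t * pt f t θ

/-- The Gowdy equation (F1) for `(S, ω)`. -/
def GowdyF1 (S ω : ℝ → ℝ → ℝ) (t θ : ℝ) : Prop :=
  Dt (Dt S) t θ - t ^ 2 * (pth (pth S) t θ + Real.cot θ * pth S t θ)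
    = (1 - t * Real.cot t) * Dt S t θ
      - Real.exp (-(2 * S t θ)) * ((Dt ω t θ) ^ 2 - t ^ 2 * (pth ω t θ) ^ 2)

/-- The Gowdy equation (F2) for `(S, ω)`. -/
def GowdyF2 (S ω : ℝ → ℝ → ℝ) (t θ : ℝ) : Prop :=
  Dt (Dt ω) t θ - 4 * Dt ω t θ - t ^ 2 * (pth (pth ω) t θ + Real.cot θ * pth ω t θ)
    = (1 - t * Real.cot t) * Dt ω t θ + 2 * (Dt S t θ - 2) * Dt ω t θ
      - 2 * t ^ 2 * pth S t θ * pth ω t θ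

section Aux

variable {f : ℝ → ℝ → ℝ} {U : Set (ℝ × ℝ)}

private lemma slice_t_diff (hU : IsOpen U) (hf : ContDiffOn ℝ (⊤ : ℕ∞) (Function.uncurry f) U)
    {t θ : ℝ} (h : (t, θ) ∈ U) : DifferentiableAt ℝ (fun s => f s θ) t := by
  have hd : DifferentiableAt ℝ (Function.uncurry f) (t, θ) :=
    (hf.contDiffAt (hU.mem_nhds h)).differentiableAt (by simp)
  exact hd.comp (f := fun s => (s, θ)) t (differentiableAt_fun_id.prodMk (differentiableAt_const θ))

private lemma slice_th_diff (hU : IsOpen U) (hf : ContDiffOn ℝ (⊤ : ℕ∞) (Function.uncurry f) U)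
    {t θ : ℝ} (h : (t, θ) ∈ U) : DifferentiableAt ℝ (fun x => f t x) θ := by
  have hd : DifferentiableAt ℝ (Function.uncurry f) (t, θ) :=
    (hf.contDiffAt (hU.mem_nhds h)).differentiableAt (by simp)
  exact hd.comp θ ((differentiableAt_const t).prodMk differentiableAt_fun_id)

private lemma pt_eq_fderiv (hU : IsOpen U) (hf : ContDiffOn ℝ (⊤ : ℕ∞) (Function.uncurry f) U)
    {t θ : ℝ} (h : (t, θ) ∈ U) :
    pt f t θ = fderiv ℝ (Function.uncurry f) (t, θ) (1, 0) := by
  have hd : DifferentiableAt ℝ (Function.uncurry f) (t, θ) :=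
    (hf.contDiffAt (hU.mem_nhds h)).differentiableAt (by simp)
  have h1 : HasDerivAt (fun s => f s θ) (fderiv ℝ (Function.uncurry f) (t, θ) (1, 0)) t :=
    by have := hd.hasFDerivAt.comp_hasDerivAt t ((hasDerivAt_id' t).prodMk (hasDerivAt_const t θ)); exact this
  simp only [pt]
  exact h1.deriv

private lemma pth_eq_fderiv (hU : IsOpen U) (hf : ContDiffOn ℝ (⊤ : ℕ∞) (Function.uncurry f) U)
    {t θ : ℝ} (h : (t, θ) ∈ U) :
    pth f t θ = fderiv ℝ (Function.uncurry f) (t, θ) (0, 1) := by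
  have hd : DifferentiableAt ℝ (Function.uncurry f) (t, θ) :=
    (hf.contDiffAt (hU.mem_nhds h)).differentiableAt (by simp)
  have h1 : HasDerivAt (fun x => f t x) (fderiv ℝ (Function.uncurry f) (t, θ) (0, 1)) θ :=
    hd.hasFDerivAt.comp_hasDerivAt θ ((hasDerivAt_const θ t).prodMk (hasDerivAt_id' θ))
  simp only [pth]
  exact h1.deriv

private lemma pt_slice_diff (hU : IsOpen U) (hf : ContDiffOn ℝ (⊤ : ℕ∞) (Function.uncurry f) U)
    {t θ : ℝ} (h : (t, θ) ∈ U) : DifferentiableAt ℝ (fun s => pt f s θ) t := by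
  have hg : ContDiffOn ℝ (⊤ : ℕ∞) (fun q => fderiv ℝ (Function.uncurry f) q (1, 0)) U :=
    (hf.fderiv_of_isOpen hU (by simp)).clm_apply contDiffOn_const
  have hgd : DifferentiableAt ℝ (fun s => fderiv ℝ (Function.uncurry f) (s, θ) (1, 0)) t :=
    ((hg.contDiffAt (hU.mem_nhds h)).differentiableAt (by simp)).comp (f := fun s => (s, θ)) t
      (differentiableAt_fun_id.prodMk (differentiableAt_const θ))
  have hmem : ∀ᶠ s in nhds t, (s, θ) ∈ U :=
    (continuous_id.prodMk continuous_const).continuousAt.preimage_mem_nhds (hU.mem_nhds h)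
  refine hgd.congr_of_eventuallyEq ?_
  filter_upwards [hmem] with s hs
  exact pt_eq_fderiv hU hf hs

private lemma pth_slice_diff (hU : IsOpen U) (hf : ContDiffOn ℝ (⊤ : ℕ∞) (Function.uncurry f) U)
    {t θ : ℝ} (h : (t, θ) ∈ U) : DifferentiableAt ℝ (fun x => pth f t x) θ := by
  have hg : ContDiffOn ℝ (⊤ : ℕ∞) (fun q => fderiv ℝ (Function.uncurry f) q (0, 1)) U :=
    (hf.fderiv_of_isOpen hU (by simp)).clm_apply contDiffOn_const
  have hgd : DifferentiableAt ℝ (fun x => fderiv ℝ (Function.uncurry f) (t, x) (0, 1)) θ :=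
    ((hg.contDiffAt (hU.mem_nhds h)).differentiableAt (by simp)).comp θ
      ((differentiableAt_const t).prodMk differentiableAt_fun_id)
  have hmem : ∀ᶠ x in nhds θ, (t, x) ∈ U :=
    (continuous_const.prodMk continuous_id).continuousAt.preimage_mem_nhds (hU.mem_nhds h)
  refine hgd.congr_of_eventuallyEq ?_
  filter_upwards [hmem] with x hx
  exact pth_eq_fderiv hU hf hx

end Aux

/-- The Gowdy equation (F2) for `ω` implies the integrability condition for the
system determining `Q`. -/
theorem integrability_condition_for_Q
    (U : Set (ℝ × ℝ)) (hU : IsOpen U) (hUsub : U ⊆ Ioo (0 : ℝ) π ×ˢ Ioo (0 : ℝ) π)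
    (R₀ : ℝ) (hR₀ : 0 < R₀) (S ω : ℝ → ℝ → ℝ)
    (hS : ContDiffOn ℝ (⊤ : ℕ∞) (Function.uncurry S) U)
    (hω : ContDiffOn ℝ (⊤ : ℕ∞) (Function.uncurry ω) U)
    (heq : ∀ p ∈ U, GowdyF2 S ω p.1 p.2) :
    ∀ p ∈ U,
      pt (fun t θ => R₀ * Real.sin t * Real.sin θ * Real.exp (-(2 * S t θ)) * pt ω t θ)
          p.1 p.2
        = pth (fun t θ => R₀ * Real.sin t * Real.sin θ * Real.exp (-(2 * S t θ)) * pth ω t θ)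
          p.1 p.2 := by
  rintro ⟨t, θ⟩ hp
  obtain ⟨⟨ht0, htπ⟩, hθ0, hθπ⟩ := hUsub hp
  have hsint : Real.sin t ≠ 0 := ne_of_gt (Real.sin_pos_of_pos_of_lt_pi ht0 htπ)
  have hsinθ : Real.sin θ ≠ 0 := ne_of_gt (Real.sin_pos_of_pos_of_lt_pi hθ0 hθπ)
  have htne : t ≠ 0 := ne_of_gt ht0
  -- differentiability facts
  have dSt : DifferentiableAt ℝ (fun s => S s θ) t := slice_t_diff hU hS hp
  have dSθ : DifferentiableAt ℝ (fun x => S t x) θ := slice_th_diff hU hS hp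
  have dωt2 : DifferentiableAt ℝ (fun s => pt ω s θ) t := pt_slice_diff hU hω hp
  have dωθ2 : DifferentiableAt ℝ (fun x => pth ω t x) θ := pth_slice_diff hU hω hp
  -- basic HasDerivAt facts
  have hSdert : HasDerivAt (fun s => S s θ) (pt S t θ) t := dSt.hasDerivAt
  have hSderθ : HasDerivAt (fun x => S t x) (pth S t θ) θ := dSθ.hasDerivAt
  have hωdert2 : HasDerivAt (fun s => pt ω s θ) (pt (pt ω) t θ) t := dωt2.hasDerivAt
  have hωderθ2 : HasDerivAt (fun x => pth ω t x) (pth (pth ω) t θ) θ := dωθ2.hasDerivAt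
  have hExpt : HasDerivAt (fun s => Real.exp (-(2 * S s θ)))
      (Real.exp (-(2 * S t θ)) * -(2 * pt S t θ)) t := ((hSdert.const_mul 2).neg).exp
  have hExpθ : HasDerivAt (fun x => Real.exp (-(2 * S t x)))
      (Real.exp (-(2 * S t θ)) * -(2 * pth S t θ)) θ := ((hSderθ.const_mul 2).neg).exp
  have hAt : HasDerivAt (fun s => R₀ * Real.sin s * Real.sin θ)
      (R₀ * Real.cos t * Real.sin θ) t :=
    ((Real.hasDerivAt_sin t).const_mul R₀).mul_const (Real.sin θ)
  have hAθ : HasDerivAt (fun x => R₀ * Real.sin t * Real.sin x)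
      (R₀ * Real.sin t * Real.cos θ) θ := (Real.hasDerivAt_sin θ).const_mul (R₀ * Real.sin t)
  have hL : HasDerivAt
      (fun s => R₀ * Real.sin s * Real.sin θ * Real.exp (-(2 * S s θ)) * pt ω s θ)
      ((R₀ * Real.cos t * Real.sin θ * Real.exp (-(2 * S t θ))
          + R₀ * Real.sin t * Real.sin θ * (Real.exp (-(2 * S t θ)) * -(2 * pt S t θ)))
            * pt ω t θ
        + R₀ * Real.sin t * Real.sin θ * Real.exp (-(2 * S t θ)) * pt (pt ω) t θ) t :=
    (hAt.mul hExpt).mul hωdert2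
  have hR : HasDerivAt
      (fun x => R₀ * Real.sin t * Real.sin x * Real.exp (-(2 * S t x)) * pth ω t x)
      ((R₀ * Real.sin t * Real.cos θ * Real.exp (-(2 * S t θ))
          + R₀ * Real.sin t * Real.sin θ * (Real.exp (-(2 * S t θ)) * -(2 * pth S t θ)))
            * pth ω t θ
        + R₀ * Real.sin t * Real.sin θ * Real.exp (-(2 * S t θ)) * pth (pth ω) t θ) θ :=
    (hAθ.mul hExpθ).mul hωderθ2
  have hLHS : pt (fun t θ => R₀ * Real.sin t * Real.sin θ * Real.exp (-(2 * S t θ)) * pt ω t θ)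
      t θ = _ := hL.deriv
  have hRHS : pth (fun t θ => R₀ * Real.sin t * Real.sin θ * Real.exp (-(2 * S t θ)) * pth ω t θ)
      t θ = _ := hR.deriv
  rw [hLHS, hRHS]
  -- the Gowdy equation
  have hF2 := heq (t, θ) hp
  simp only [GowdyF2, Dt] at hF2
  have hDD : pt (Dt ω) t θ = 1 * pt ω t θ + t * pt (pt ω) t θ :=
    ((hasDerivAt_id t).mul hωdert2).deriv
  rw [hDD, Real.cot_eq_cos_div_sin, Real.cot_eq_cos_div_sin] at hF2
  set a := pt ω t θ
  set b := pth ω t θ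
  set c := pt (pt ω) t θ
  set d := pth (pth ω) t θ
  set st := pt S t θ
  set sθ := pth S t θ
  set E := Real.exp (-(2 * S t θ))
  field_simp at hF2
  have h2 : t ^ 2 * (Real.sin t * Real.sin θ * c + Real.cos t * Real.sin θ * a
        - 2 * st * (Real.sin t * Real.sin θ) * a)
      = t ^ 2 * (Real.sin t * Real.sin θ * d + Real.sin t * Real.cos θ * b
        - 2 * sθ * (Real.sin t * Real.sin θ) * b) := by linear_combination t * hF2
  have key := mul_left_cancel₀ (pow_ne_zero 2 htne) h2
  linear_combination (R₀ * E) * key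
end
end

section
/- Let U ⊆ (0,π)×(0,π) be open with sin(t+θ) ≠ 0 and sin(t−θ) ≠ 0 on U, let R₀ > 0, and let S, ω : U → ℝ be smooth functions satisfying the Gowdy equations (F1) and (F2) on U. Define R := R₀ sin t sin θ, R± := R₀ sin(t±θ), g± := ∂θg ± ∂ₜg for a function g, μ± := 4∂θR± + R(S±² + e^{−2S}ω±²), F^even := μ₊/(4R₊) − μ₋/(4R₋) − 2/t, F^odd := μ₊/(4R₊) + μ₋/(4R₋), and G^even := 2/t² + (1/2)(S₊S₋ + e^{−2S}ω₊ω₋). Then on U: ∂ₜF^even − ∂θF^odd = G^even and ∂ₜF^odd − ∂θF^even = 0. -/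
noncomputable section

open Real Set

/-- `g₊ = ∂θ g + ∂ₜ g`. -/
def gplus (g : ℝ → ℝ → ℝ) (t θ : ℝ) : ℝ := pth g t θ + pt g t θ

/-- `g₋ = ∂θ g - ∂ₜ g`. -/
def gminus (g : ℝ → ℝ → ℝ) (t θ : ℝ) : ℝ := pth g t θ - pt g t θ

/-- `μ₊ = 4 ∂θ R₊ + R (S₊² + e^{-2S} ω₊²)` with `R₊ = R₀ sin (t + θ)`. -/
def muPlus (R₀ : ℝ) (S ω : ℝ → ℝ → ℝ) (t θ : ℝ) : ℝ :=
  4 * (R₀ * Real.cos (t + θ)) +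
    R₀ * Real.sin t * Real.sin θ *
      ((gplus S t θ) ^ 2 + Real.exp (-(2 * S t θ)) * (gplus ω t θ) ^ 2)

/-- `μ₋ = 4 ∂θ R₋ + R (S₋² + e^{-2S} ω₋²)` with `R₋ = R₀ sin (t - θ)`. -/
def muMinus (R₀ : ℝ) (S ω : ℝ → ℝ → ℝ) (t θ : ℝ) : ℝ :=
  4 * (-(R₀ * Real.cos (t - θ))) +
    R₀ * Real.sin t * Real.sin θ *
      ((gminus S t θ) ^ 2 + Real.exp (-(2 * S t θ)) * (gminus ω t θ) ^ 2)

/-- Constraint (C1): `∂ₜ M = -∂ₜ S + μ₊/(4R₊) - μ₋/(4R₋)`. -/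
def ConstraintC1 (R₀ : ℝ) (S ω M : ℝ → ℝ → ℝ) (t θ : ℝ) : Prop :=
  pt M t θ = -pt S t θ + muPlus R₀ S ω t θ / (4 * (R₀ * Real.sin (t + θ)))
    - muMinus R₀ S ω t θ / (4 * (R₀ * Real.sin (t - θ)))

/-- Constraint (C2): `∂θ M = -∂θ S + μ₊/(4R₊) + μ₋/(4R₋)`. -/
def ConstraintC2 (R₀ : ℝ) (S ω M : ℝ → ℝ → ℝ) (t θ : ℝ) : Prop :=
  pth M t θ = -pth S t θ + muPlus R₀ S ω t θ / (4 * (R₀ * Real.sin (t + θ)))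
    + muMinus R₀ S ω t θ / (4 * (R₀ * Real.sin (t - θ)))

/-- `F^even = μ₊/(4R₊) - μ₋/(4R₋) - 2/t`. -/
def Feven (R₀ : ℝ) (S ω : ℝ → ℝ → ℝ) (t θ : ℝ) : ℝ :=
  muPlus R₀ S ω t θ / (4 * (R₀ * Real.sin (t + θ)))
    - muMinus R₀ S ω t θ / (4 * (R₀ * Real.sin (t - θ))) - 2 / t

/-- `F^odd = μ₊/(4R₊) + μ₋/(4R₋)`. -/
def Fodd (R₀ : ℝ) (S ω : ℝ → ℝ → ℝ) (t θ : ℝ) : ℝ :=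
  muPlus R₀ S ω t θ / (4 * (R₀ * Real.sin (t + θ)))
    + muMinus R₀ S ω t θ / (4 * (R₀ * Real.sin (t - θ)))

/-- `G^even = 2/t² + (S₊S₋ + e^{-2S} ω₊ω₋)/2`. -/
def Geven (S ω : ℝ → ℝ → ℝ) (t θ : ℝ) : ℝ :=
  2 / t ^ 2 + (1 / 2) * (gplus S t θ * gminus S t θ
    + Real.exp (-(2 * S t θ)) * gplus ω t θ * gminus ω t θ)

section helpers
variable {f : ℝ × ℝ → ℝ} {U : Set (ℝ × ℝ)} {t θ : ℝ}

lemma hasDerivAt_slice_fst (hf : DifferentiableAt ℝ f (t, θ)) :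
    HasDerivAt (fun s => f (s, θ)) (fderiv ℝ f (t, θ) (1, 0)) t := by
  have h : HasDerivAt (fun s : ℝ => (s, θ)) ((1:ℝ), (0:ℝ)) t :=
    (hasDerivAt_id t).prodMk (hasDerivAt_const t θ)
  exact hf.hasFDerivAt.comp_hasDerivAt t h

lemma hasDerivAt_slice_snd (hf : DifferentiableAt ℝ f (t, θ)) :
    HasDerivAt (fun x => f (t, x)) (fderiv ℝ f (t, θ) (0, 1)) θ := by
  have h : HasDerivAt (fun x : ℝ => (t, x)) ((0:ℝ), (1:ℝ)) θ :=
    (hasDerivAt_const θ t).prodMk (hasDerivAt_id θ)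
  exact hf.hasFDerivAt.comp_hasDerivAt θ h

lemma pt_eq (hf : DifferentiableAt ℝ f (t, θ)) :
    pt (fun a b => f (a, b)) t θ = fderiv ℝ f (t, θ) (1, 0) :=
  (hasDerivAt_slice_fst hf).deriv

lemma pth_eq (hf : DifferentiableAt ℝ f (t, θ)) :
    pth (fun a b => f (a, b)) t θ = fderiv ℝ f (t, θ) (0, 1) :=
  (hasDerivAt_slice_snd hf).deriv

lemma contDiffAt_of_on (hU : IsOpen U) (hf : ContDiffOn ℝ (⊤ : ℕ∞) f U) (hp : (t, θ) ∈ U) :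
    ContDiffAt ℝ (⊤ : ℕ∞) f (t, θ) := hf.contDiffAt (hU.mem_nhds hp)

lemma hasDerivAt_pd_fst (hU : IsOpen U) (hf : ContDiffOn ℝ (⊤ : ℕ∞) f U) (hp : (t, θ) ∈ U) (v : ℝ × ℝ) :
    HasDerivAt (fun s => fderiv ℝ f (s, θ) v)
      (fderiv ℝ (fderiv ℝ f) (t, θ) (1, 0) v) t := by
  have hct : ContDiffAt ℝ (⊤ : ℕ∞) (fderiv ℝ f) (t, θ) :=
    (contDiffAt_of_on hU hf hp).fderiv_right (by simp)
  have hd : DifferentiableAt ℝ (fderiv ℝ f) (t, θ) := hct.differentiableAt (by simp)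
  have h1 : HasDerivAt (fun s => fderiv ℝ f (s, θ)) (fderiv ℝ (fderiv ℝ f) (t, θ) (1, 0)) t := by
    have h : HasDerivAt (fun s : ℝ => (s, θ)) ((1:ℝ), (0:ℝ)) t :=
      (hasDerivAt_id t).prodMk (hasDerivAt_const t θ)
    exact hd.hasFDerivAt.comp_hasDerivAt t h
  exact h1.clm_apply (hasDerivAt_const _ v) |>.congr_deriv (by simp)

end helpers

section helpers2
variable {f : ℝ × ℝ → ℝ} {U : Set (ℝ × ℝ)} {t θ : ℝ}

lemma hasDerivAt_pd_snd (hU : IsOpen U) (hf : ContDiffOn ℝ (⊤ : ℕ∞) f U) (hp : (t, θ) ∈ U) (v : ℝ × ℝ) :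
    HasDerivAt (fun x => fderiv ℝ f (t, x) v)
      (fderiv ℝ (fderiv ℝ f) (t, θ) (0, 1) v) θ := by
  have hct : ContDiffAt ℝ (⊤ : ℕ∞) (fderiv ℝ f) (t, θ) :=
    (contDiffAt_of_on hU hf hp).fderiv_right (by simp)
  have hd : DifferentiableAt ℝ (fderiv ℝ f) (t, θ) := hct.differentiableAt (by simp)
  have h1 : HasDerivAt (fun x => fderiv ℝ f (t, x)) (fderiv ℝ (fderiv ℝ f) (t, θ) (0, 1)) θ := by
    have h : HasDerivAt (fun x : ℝ => (t, x)) ((0:ℝ), (1:ℝ)) θ :=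
      (hasDerivAt_const θ t).prodMk (hasDerivAt_id θ)
    exact hd.hasFDerivAt.comp_hasDerivAt θ h
  exact h1.clm_apply (hasDerivAt_const _ v) |>.congr_deriv (by simp)

lemma ev_fst (hU : IsOpen U) (hp : (t, θ) ∈ U) {g h : ℝ → ℝ → ℝ}
    (hgh : ∀ q ∈ U, g q.1 q.2 = h q.1 q.2) :
    (fun s => g s θ) =ᶠ[nhds t] (fun s => h s θ) := by
  have hc : Continuous (fun s : ℝ => (s, θ)) := by fun_prop
  have : ∀ᶠ s in nhds t, (s, θ) ∈ U := hc.continuousAt (hU.mem_nhds hp)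
  filter_upwards [this] with s hs using hgh _ hs

lemma ev_snd (hU : IsOpen U) (hp : (t, θ) ∈ U) {g h : ℝ → ℝ → ℝ}
    (hgh : ∀ q ∈ U, g q.1 q.2 = h q.1 q.2) :
    (fun x => g t x) =ᶠ[nhds θ] (fun x => h t x) := by
  have hc : Continuous (fun x : ℝ => (t, x)) := by fun_prop
  have : ∀ᶠ x in nhds θ, (t, x) ∈ U := hc.continuousAt (hU.mem_nhds hp)
  filter_upwards [this] with x hx using hgh _ hx

lemma pt_eq_on (hU : IsOpen U) (hf : ContDiffOn ℝ (⊤ : ℕ∞) f U) :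
    ∀ q ∈ U, pt (fun a b => f (a, b)) q.1 q.2 = (fun a b => fderiv ℝ f (a, b) (1, 0)) q.1 q.2 := by
  rintro ⟨a, b⟩ hq
  exact pt_eq ((contDiffAt_of_on hU hf hq).differentiableAt (by simp))

lemma pth_eq_on (hU : IsOpen U) (hf : ContDiffOn ℝ (⊤ : ℕ∞) f U) :
    ∀ q ∈ U, pth (fun a b => f (a, b)) q.1 q.2 = (fun a b => fderiv ℝ f (a, b) (0, 1)) q.1 q.2 := by
  rintro ⟨a, b⟩ hq
  exact pth_eq ((contDiffAt_of_on hU hf hq).differentiableAt (by simp))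

lemma hasDerivAt_pt_fst (hU : IsOpen U) (hf : ContDiffOn ℝ (⊤ : ℕ∞) f U) (hp : (t, θ) ∈ U) :
    HasDerivAt (fun s => pt (fun a b => f (a, b)) s θ)
      (fderiv ℝ (fderiv ℝ f) (t, θ) (1, 0) (1, 0)) t :=
  (hasDerivAt_pd_fst hU hf hp (1, 0)).congr_of_eventuallyEq (ev_fst (h := fun a b => fderiv ℝ f (a, b) (1, 0)) hU hp (pt_eq_on hU hf))

lemma hasDerivAt_pth_fst (hU : IsOpen U) (hf : ContDiffOn ℝ (⊤ : ℕ∞) f U) (hp : (t, θ) ∈ U) :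
    HasDerivAt (fun s => pth (fun a b => f (a, b)) s θ)
      (fderiv ℝ (fderiv ℝ f) (t, θ) (1, 0) (0, 1)) t :=
  (hasDerivAt_pd_fst hU hf hp (0, 1)).congr_of_eventuallyEq (ev_fst (h := fun a b => fderiv ℝ f (a, b) (0, 1)) hU hp (pth_eq_on hU hf))

lemma hasDerivAt_pt_snd (hU : IsOpen U) (hf : ContDiffOn ℝ (⊤ : ℕ∞) f U) (hp : (t, θ) ∈ U) :
    HasDerivAt (fun x => pt (fun a b => f (a, b)) t x)
      (fderiv ℝ (fderiv ℝ f) (t, θ) (0, 1) (1, 0)) θ :=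
  (hasDerivAt_pd_snd hU hf hp (1, 0)).congr_of_eventuallyEq (ev_snd (h := fun a b => fderiv ℝ f (a, b) (1, 0)) hU hp (pt_eq_on hU hf))

lemma hasDerivAt_pth_snd (hU : IsOpen U) (hf : ContDiffOn ℝ (⊤ : ℕ∞) f U) (hp : (t, θ) ∈ U) :
    HasDerivAt (fun x => pth (fun a b => f (a, b)) t x)
      (fderiv ℝ (fderiv ℝ f) (t, θ) (0, 1) (0, 1)) θ :=
  (hasDerivAt_pd_snd hU hf hp (0, 1)).congr_of_eventuallyEq (ev_snd (h := fun a b => fderiv ℝ f (a, b) (0, 1)) hU hp (pth_eq_on hU hf))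

lemma schwarz (hU : IsOpen U) (hf : ContDiffOn ℝ (⊤ : ℕ∞) f U) (hp : (t, θ) ∈ U) :
    fderiv ℝ (fderiv ℝ f) (t, θ) (1, 0) (0, 1) =
    fderiv ℝ (fderiv ℝ f) (t, θ) (0, 1) (1, 0) :=
  ((contDiffAt_of_on hU hf hp).isSymmSndFDerivAt (by rw [minSmoothness_of_isRCLikeNormedField]; exact WithTop.coe_le_coe.mpr le_top)) _ _

end helpers2


set_option maxHeartbeats 8000000 in
set_option maxRecDepth 100000 in
/-- The functions `F^even`, `F^odd` satisfy a linear symmetric hyperbolic system with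
source `G^even`, as a consequence of the Gowdy equations. -/
theorem Feven_Fodd_hyperbolic_system
    (U : Set (ℝ × ℝ)) (hU : IsOpen U) (hUsub : U ⊆ Ioo (0 : ℝ) π ×ˢ Ioo (0 : ℝ) π)
    (hUsin : ∀ p ∈ U, Real.sin (p.1 + p.2) ≠ 0 ∧ Real.sin (p.1 - p.2) ≠ 0)
    (R₀ : ℝ) (hR₀ : 0 < R₀) (S ω : ℝ → ℝ → ℝ)
    (hS : ContDiffOn ℝ (⊤ : ℕ∞) (Function.uncurry S) U)
    (hω : ContDiffOn ℝ (⊤ : ℕ∞) (Function.uncurry ω) U)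
    (heq : ∀ p ∈ U, GowdyF1 S ω p.1 p.2 ∧ GowdyF2 S ω p.1 p.2) :
    ∀ p ∈ U,
      pt (Feven R₀ S ω) p.1 p.2 - pth (Fodd R₀ S ω) p.1 p.2 = Geven S ω p.1 p.2 ∧
      pt (Fodd R₀ S ω) p.1 p.2 - pth (Feven R₀ S ω) p.1 p.2 = 0 := by
  rintro ⟨t, θ⟩ hp
  obtain ⟨hsp, hsm⟩ := hUsin _ hp
  obtain ⟨ht, hθ⟩ := hUsub hp
  have hst : Real.sin t ≠ 0 := ne_of_gt (Real.sin_pos_of_pos_of_lt_pi ht.1 ht.2)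
  have hsh : Real.sin θ ≠ 0 := ne_of_gt (Real.sin_pos_of_pos_of_lt_pi hθ.1 hθ.2)
  have ht0 : t ≠ 0 := ne_of_gt ht.1
  have hR : R₀ ≠ 0 := ne_of_gt hR₀
  obtain ⟨h1, h2⟩ := heq _ hp
  -- differentiability of S and ω
  have hdS : DifferentiableAt ℝ (Function.uncurry S) (t, θ) :=
    ((hS.contDiffAt (hU.mem_nhds hp)).differentiableAt (by simp))
  have hdW : DifferentiableAt ℝ (Function.uncurry ω) (t, θ) :=
    ((hω.contDiffAt (hU.mem_nhds hp)).differentiableAt (by simp))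
  -- first partial values
  have hptS : pt S t θ = fderiv ℝ (Function.uncurry S) (t, θ) (1, 0) := pt_eq hdS
  have hpthS : pth S t θ = fderiv ℝ (Function.uncurry S) (t, θ) (0, 1) := pth_eq hdS
  have hptW : pt ω t θ = fderiv ℝ (Function.uncurry ω) (t, θ) (1, 0) := pt_eq hdW
  have hpthW : pth ω t θ = fderiv ℝ (Function.uncurry ω) (t, θ) (0, 1) := pth_eq hdW
  -- slices of S, ω themselves
  have hSt : HasDerivAt (fun s => S s θ) (fderiv ℝ (Function.uncurry S) (t, θ) (1, 0)) t :=
    hasDerivAt_slice_fst hdS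
  have hSth : HasDerivAt (fun x => S t x) (fderiv ℝ (Function.uncurry S) (t, θ) (0, 1)) θ :=
    hasDerivAt_slice_snd hdS
  -- second partial slices
  have hS11t : HasDerivAt (fun s => pt S s θ)
      (fderiv ℝ (fderiv ℝ (Function.uncurry S)) (t, θ) (1, 0) (1, 0)) t :=
    hasDerivAt_pt_fst hU hS hp
  have hS12t : HasDerivAt (fun s => pth S s θ)
      (fderiv ℝ (fderiv ℝ (Function.uncurry S)) (t, θ) (1, 0) (0, 1)) t :=
    hasDerivAt_pth_fst hU hS hp
  have hS21th : HasDerivAt (fun x => pt S t x)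
      (fderiv ℝ (fderiv ℝ (Function.uncurry S)) (t, θ) (0, 1) (1, 0)) θ :=
    hasDerivAt_pt_snd hU hS hp
  have hS22th : HasDerivAt (fun x => pth S t x)
      (fderiv ℝ (fderiv ℝ (Function.uncurry S)) (t, θ) (0, 1) (0, 1)) θ :=
    hasDerivAt_pth_snd hU hS hp
  have hW11t : HasDerivAt (fun s => pt ω s θ)
      (fderiv ℝ (fderiv ℝ (Function.uncurry ω)) (t, θ) (1, 0) (1, 0)) t :=
    hasDerivAt_pt_fst hU hω hp
  have hW12t : HasDerivAt (fun s => pth ω s θ)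
      (fderiv ℝ (fderiv ℝ (Function.uncurry ω)) (t, θ) (1, 0) (0, 1)) t :=
    hasDerivAt_pth_fst hU hω hp
  have hW21th : HasDerivAt (fun x => pt ω t x)
      (fderiv ℝ (fderiv ℝ (Function.uncurry ω)) (t, θ) (0, 1) (1, 0)) θ :=
    hasDerivAt_pt_snd hU hω hp
  have hW22th : HasDerivAt (fun x => pth ω t x)
      (fderiv ℝ (fderiv ℝ (Function.uncurry ω)) (t, θ) (0, 1) (0, 1)) θ :=
    hasDerivAt_pth_snd hU hω hp
  have hsymS := schwarz hU hS hp
  have hsymW := schwarz hU hω hp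
  rw [hsymS] at hS12t
  rw [hsymW] at hW12t
  -- nonvanishing denominators
  have hdP : 4 * (R₀ * Real.sin (t + θ)) ≠ 0 :=
    mul_ne_zero four_ne_zero (mul_ne_zero hR hsp)
  have hdM : 4 * (R₀ * Real.sin (t - θ)) ≠ 0 :=
    mul_ne_zero four_ne_zero (mul_ne_zero hR hsm)
  -- exponential slices
  have hEt : HasDerivAt (fun s => Real.exp (-(2 * S s θ)))
      (Real.exp (-(2 * S t θ)) * -(2 * fderiv ℝ (Function.uncurry S) (t, θ) (1, 0))) t :=
    ((hSt.const_mul (2 : ℝ)).neg).exp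
  have hEth : HasDerivAt (fun x => Real.exp (-(2 * S t x)))
      (Real.exp (-(2 * S t θ)) * -(2 * fderiv ℝ (Function.uncurry S) (t, θ) (0, 1))) θ :=
    ((hSth.const_mul (2 : ℝ)).neg).exp
  -- t-direction derivatives of muPlus, muMinus
  have HmuP_t := ((((hasDerivAt_id t).add_const θ).cos.const_mul R₀).const_mul 4).add
    ((((Real.hasDerivAt_sin t).const_mul R₀).mul_const (Real.sin θ)).mul
      (((hS12t.add hS11t).pow 2).add (hEt.mul ((hW12t.add hW11t).pow 2))))
  have HmuM_t := (((((hasDerivAt_id t).sub_const θ).cos.const_mul R₀).neg).const_mul 4).add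
    ((((Real.hasDerivAt_sin t).const_mul R₀).mul_const (Real.sin θ)).mul
      (((hS12t.sub hS11t).pow 2).add (hEt.mul ((hW12t.sub hW11t).pow 2))))
  have HdP_t := (((hasDerivAt_id t).add_const θ).sin.const_mul R₀).const_mul 4
  have HdM_t := (((hasDerivAt_id t).sub_const θ).sin.const_mul R₀).const_mul 4
  have HFe_t := ((HmuP_t.div HdP_t hdP).sub (HmuM_t.div HdM_t hdM)).sub
    ((hasDerivAt_const t (2 : ℝ)).div (hasDerivAt_id t) ht0)
  have HFo_t := (HmuP_t.div HdP_t hdP).add (HmuM_t.div HdM_t hdM)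
  -- θ-direction derivatives
  have HmuP_th := ((((hasDerivAt_id θ).const_add t).cos.const_mul R₀).const_mul 4).add
    (((Real.hasDerivAt_sin θ).const_mul (R₀ * Real.sin t)).mul
      (((hS22th.add hS21th).pow 2).add (hEth.mul ((hW22th.add hW21th).pow 2))))
  have HmuM_th := (((((hasDerivAt_id θ).const_sub t).cos.const_mul R₀).neg).const_mul 4).add
    (((Real.hasDerivAt_sin θ).const_mul (R₀ * Real.sin t)).mul
      (((hS22th.sub hS21th).pow 2).add (hEth.mul ((hW22th.sub hW21th).pow 2))))
  have HdP_th := (((hasDerivAt_id θ).const_add t).sin.const_mul R₀).const_mul 4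
  have HdM_th := (((hasDerivAt_id θ).const_sub t).sin.const_mul R₀).const_mul 4
  have HFe_th := (((HmuP_th.div HdP_th hdP).sub (HmuM_th.div HdM_th hdM)).sub_const (2 / t))
  have HFo_th := (HmuP_th.div HdP_th hdP).add (HmuM_th.div HdM_th hdM)
  -- partial derivative values of Feven, Fodd
  have eFe_t : pt (Feven R₀ S ω) t θ = _ := HFe_t.deriv
  have eFo_t : pt (Fodd R₀ S ω) t θ = _ := HFo_t.deriv
  have eFe_th : pth (Feven R₀ S ω) t θ = _ := HFe_th.deriv
  have eFo_th : pth (Fodd R₀ S ω) t θ = _ := HFo_th.deriv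
  -- convert field equations to algebraic form
  have eDtS : pt (Dt S) t θ = _ := ((hasDerivAt_id t).mul hS11t).deriv
  have eDtW : pt (Dt ω) t θ = _ := ((hasDerivAt_id t).mul hW11t).deriv
  have eS22 : pth (pth S) t θ = _ := hS22th.deriv
  have eW22 : pth (pth ω) t θ = _ := hW22th.deriv
  rw [GowdyF1] at h1
  rw [GowdyF2] at h2
  rw [show Dt (Dt S) t θ = t * pt (Dt S) t θ from rfl, eDtS, eS22] at h1
  rw [show Dt (Dt ω) t θ = t * pt (Dt ω) t θ from rfl, eDtW, eW22] at h2
  simp only [show Dt S t θ = t * pt S t θ from rfl, show Dt ω t θ = t * pt ω t θ from rfl,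
    Real.cot_eq_cos_div_sin, hptS, hpthS, hptW, hpthW, id_eq] at h1 h2
  refine ⟨?_, ?_⟩
  · rw [eFe_t, eFo_th]
    simp only [Geven, gplus, gminus, Pi.add_apply, Pi.sub_apply, Pi.mul_apply, Pi.pow_apply, Pi.neg_apply, Pi.div_apply, hptS, hpthS, hptW, hpthW, Real.sin_add, Real.cos_add,
      Real.sin_sub, Real.cos_sub]
    set S1 := fderiv ℝ (Function.uncurry S) (t, θ) (1, 0) with hv1
    set S2 := fderiv ℝ (Function.uncurry S) (t, θ) (0, 1) with hv2
    set S11 := fderiv ℝ (fderiv ℝ (Function.uncurry S)) (t, θ) (1, 0) (1, 0) with hv3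
    set S12 := fderiv ℝ (fderiv ℝ (Function.uncurry S)) (t, θ) (0, 1) (1, 0) with hv4
    set S22 := fderiv ℝ (fderiv ℝ (Function.uncurry S)) (t, θ) (0, 1) (0, 1) with hv5
    set W1 := fderiv ℝ (Function.uncurry ω) (t, θ) (1, 0) with hv6
    set W2 := fderiv ℝ (Function.uncurry ω) (t, θ) (0, 1) with hv7
    set W11 := fderiv ℝ (fderiv ℝ (Function.uncurry ω)) (t, θ) (1, 0) (1, 0) with hv8
    set W12 := fderiv ℝ (fderiv ℝ (Function.uncurry ω)) (t, θ) (0, 1) (1, 0) with hv9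
    set W22 := fderiv ℝ (fderiv ℝ (Function.uncurry ω)) (t, θ) (0, 1) (0, 1) with hv10
    set E := Real.exp (-(2 * S t θ)) with hv11
    clear_value S1 S2 S11 S12 S22 W1 W2 W11 W12 W22 E
    have h1' : t ^ 2 * (S11 - S22 - Real.cos θ / Real.sin θ * S2 + Real.cos t / Real.sin t * S1
        + E * (W1 ^ 2 - W2 ^ 2)) = 0 := by linear_combination h1
    have h2' : t ^ 2 * (W11 - W22 - Real.cos θ / Real.sin θ * W2 + Real.cos t / Real.sin t * W1
        - 2 * S1 * W1 + 2 * S2 * W2) = 0 := by linear_combination h2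
    have hS11 : S11 = S22 + Real.cos θ / Real.sin θ * S2 - Real.cos t / Real.sin t * S1
        - E * (W1 ^ 2 - W2 ^ 2) := by
      rcases mul_eq_zero.mp h1' with h | h
      · exact absurd h (pow_ne_zero 2 ht0)
      · linarith
    have hW11 : W11 = W22 + Real.cos θ / Real.sin θ * W2 - Real.cos t / Real.sin t * W1
        + 2 * S1 * W1 - 2 * S2 * W2 := by
      rcases mul_eq_zero.mp h2' with h | h
      · exact absurd h (pow_ne_zero 2 ht0)
      · linarith
    have hsp' : Real.sin t * Real.cos θ + Real.cos t * Real.sin θ ≠ 0 := by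
      rw [← Real.sin_add]; exact hsp
    have hsm' : Real.sin t * Real.cos θ - Real.cos t * Real.sin θ ≠ 0 := by
      rw [← Real.sin_sub]; exact hsm
    rw [hS11, hW11]
    simp only [id_eq]
    field_simp
    ring
  · rw [eFo_t, eFe_th]
    simp only [gplus, gminus, Pi.add_apply, Pi.sub_apply, Pi.mul_apply, Pi.pow_apply, Pi.neg_apply, Pi.div_apply, hptS, hpthS, hptW, hpthW, Real.sin_add, Real.cos_add,
      Real.sin_sub, Real.cos_sub]
    set S1 := fderiv ℝ (Function.uncurry S) (t, θ) (1, 0) with hv1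
    set S2 := fderiv ℝ (Function.uncurry S) (t, θ) (0, 1) with hv2
    set S11 := fderiv ℝ (fderiv ℝ (Function.uncurry S)) (t, θ) (1, 0) (1, 0) with hv3
    set S12 := fderiv ℝ (fderiv ℝ (Function.uncurry S)) (t, θ) (0, 1) (1, 0) with hv4
    set S22 := fderiv ℝ (fderiv ℝ (Function.uncurry S)) (t, θ) (0, 1) (0, 1) with hv5
    set W1 := fderiv ℝ (Function.uncurry ω) (t, θ) (1, 0) with hv6
    set W2 := fderiv ℝ (Function.uncurry ω) (t, θ) (0, 1) with hv7
    set W11 := fderiv ℝ (fderiv ℝ (Function.uncurry ω)) (t, θ) (1, 0) (1, 0) with hv8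
    set W12 := fderiv ℝ (fderiv ℝ (Function.uncurry ω)) (t, θ) (0, 1) (1, 0) with hv9
    set W22 := fderiv ℝ (fderiv ℝ (Function.uncurry ω)) (t, θ) (0, 1) (0, 1) with hv10
    set E := Real.exp (-(2 * S t θ)) with hv11
    clear_value S1 S2 S11 S12 S22 W1 W2 W11 W12 W22 E
    have h1' : t ^ 2 * (S11 - S22 - Real.cos θ / Real.sin θ * S2 + Real.cos t / Real.sin t * S1
        + E * (W1 ^ 2 - W2 ^ 2)) = 0 := by linear_combination h1
    have h2' : t ^ 2 * (W11 - W22 - Real.cos θ / Real.sin θ * W2 + Real.cos t / Real.sin t * W1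
        - 2 * S1 * W1 + 2 * S2 * W2) = 0 := by linear_combination h2
    have hS11 : S11 = S22 + Real.cos θ / Real.sin θ * S2 - Real.cos t / Real.sin t * S1
        - E * (W1 ^ 2 - W2 ^ 2) := by
      rcases mul_eq_zero.mp h1' with h | h
      · exact absurd h (pow_ne_zero 2 ht0)
      · linarith
    have hW11 : W11 = W22 + Real.cos θ / Real.sin θ * W2 - Real.cos t / Real.sin t * W1
        + 2 * S1 * W1 - 2 * S2 * W2 := by
      rcases mul_eq_zero.mp h2' with h | h
      · exact absurd h (pow_ne_zero 2 ht0)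
      · linarith
    have hsp' : Real.sin t * Real.cos θ + Real.cos t * Real.sin θ ≠ 0 := by
      rw [← Real.sin_add]; exact hsp
    have hsm' : Real.sin t * Real.cos θ - Real.cos t * Real.sin θ ≠ 0 := by
      rw [← Real.sin_sub]; exact hsm
    rw [hS11, hW11]
    simp only [id_eq]
    field_simp
    ring
end
end

section
/- Let U ⊆ (0,π)×(0,π) be open and let ℰ = f + i b : U → ℂ be a smooth solution of the Ernst equation on U with f = Re ℰ > 0. Then the integrability condition ∂θ(f^{−2} sin t sin θ · ∂θb) = ∂ₜ(f^{−2} sin t sin θ · ∂ₜb) holds on U; equivalently, the system ∂ₜa = f^{−2} sin t sin θ · ∂θb, ∂θa = f^{−2} sin t sin θ · ∂ₜb for an unknown a is locally integrable. -/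
noncomputable section

open Real Set

/-- Partial `t`-derivative of a complex-valued function of `(t, θ)`. -/
def ptc (F : ℝ → ℝ → ℂ) (t θ : ℝ) : ℂ := deriv (fun s => F s θ) t

/-- Partial `θ`-derivative of a complex-valued function of `(t, θ)`. -/
def pthc (F : ℝ → ℝ → ℂ) (t θ : ℝ) : ℂ := deriv (fun x => F t x) θ

/-- The Ernst equation for a complex potential `E` with `f = Re E`. -/
def ErnstEq (E : ℝ → ℝ → ℂ) (t θ : ℝ) : Prop :=
  ((E t θ).re : ℂ) *
      (-(ptc (ptc E) t θ) - (Real.cot t : ℂ) * ptc E t θ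
        + pthc (pthc E) t θ + (Real.cot θ : ℂ) * pthc E t θ)
    = -(ptc E t θ) ^ 2 + (pthc E t θ) ^ 2

/-- Algebraic core of the integrability computation. -/
lemma ernst_alg (F st sθ ct cθ Ft Fθ Bt1 Bθ1 Bt2 Bθ2 : ℝ) (hF : F ≠ 0) (hst : st ≠ 0)
    (hsθ : sθ ≠ 0)
    (h : F * (-Bt2 - ct/st * Bt1 + Bθ2 + cθ/sθ * Bθ1) = -(2*Ft*Bt1) + 2*Fθ*Bθ1) :
    (st*cθ*F^2 - st*sθ*(2*F*Fθ))/(F^2)^2 * Bθ1 + st*sθ/F^2 * Bθ2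
      = (ct*sθ*F^2 - st*sθ*(2*F*Ft))/(F^2)^2 * Bt1 + st*sθ/F^2 * Bt2 := by
  have h' : F * (-(Bt2*st*sθ) - ct*sθ*Bt1 + Bθ2*st*sθ + cθ*st*Bθ1)
      = (-(2*Ft*Bt1) + 2*Fθ*Bθ1)*(st*sθ) := by
    field_simp at h
    linear_combination h
  rw [div_mul_eq_mul_div, div_mul_eq_mul_div, div_mul_eq_mul_div, div_mul_eq_mul_div,
    div_add_div _ _ (by positivity) (by positivity), div_add_div _ _ (by positivity) (by positivity),
    div_eq_div_iff (by positivity) (by positivity)]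
  linear_combination (F^9) * h'

/-- Calculus facts about a smooth slice `g : ℝ → ℂ` on an open set. -/
lemma slice_facts (g : ℝ → ℂ) (I : Set ℝ) (hI : IsOpen I) (hg : ContDiffOn ℝ (⊤ : ℕ∞) g I)
    (x : ℝ) (hx : x ∈ I) :
    HasDerivAt (fun s => (g s).re) ((deriv g x).re) x ∧
    HasDerivAt (fun s => (g s).im) ((deriv g x).im) x ∧
    HasDerivAt (deriv (fun s => (g s).im)) ((deriv (deriv g) x).im) x ∧
    deriv (fun s => (g s).im) x = (deriv g x).im := by
  have hdiff : ∀ y ∈ I, HasDerivAt g (deriv g y) y := by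
    intro y hy
    exact ((hg.contDiffAt (hI.mem_nhds hy)).differentiableAt (by simp)).hasDerivAt
  have hre : HasDerivAt (fun s => (g s).re) ((deriv g x).re) x :=
    Complex.reCLM.hasFDerivAt.comp_hasDerivAt x (hdiff x hx)
  have him : ∀ y ∈ I, HasDerivAt (fun s => (g s).im) ((deriv g y).im) y := fun y hy =>
    Complex.imCLM.hasFDerivAt.comp_hasDerivAt y (hdiff y hy)
  have heq : ∀ y ∈ I, deriv (fun s => (g s).im) y = (deriv g y).im := fun y hy =>
    (him y hy).deriv
  have hdg : ContDiffOn ℝ (⊤ : ℕ∞) (deriv g) I := hg.deriv_of_isOpen hI (by simp)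
  have hdg2 : HasDerivAt (deriv g) (deriv (deriv g) x) x :=
    ((hdg.contDiffAt (hI.mem_nhds hx)).differentiableAt (by simp)).hasDerivAt
  have h2 : HasDerivAt (fun s => (deriv g s).im) ((deriv (deriv g) x).im) x :=
    Complex.imCLM.hasFDerivAt.comp_hasDerivAt x hdg2
  have h3 : HasDerivAt (deriv (fun s => (g s).im)) ((deriv (deriv g) x).im) x := by
    apply h2.congr_of_eventuallyEq
    filter_upwards [hI.mem_nhds hx] with y hy using (heq y hy)
  exact ⟨hre, him x hx, h3, heq x hx⟩

/-- The Ernst equation implies the integrability condition for the system determining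
the potential `a`. -/
theorem integrability_condition_for_a
    (U : Set (ℝ × ℝ)) (hU : IsOpen U) (hUsub : U ⊆ Ioo (0 : ℝ) π ×ˢ Ioo (0 : ℝ) π)
    (E : ℝ → ℝ → ℂ) (hE : ContDiffOn ℝ (⊤ : ℕ∞) (Function.uncurry E) U)
    (hErnst : ∀ p ∈ U, ErnstEq E p.1 p.2)
    (hf : ∀ p ∈ U, 0 < (E p.1 p.2).re) :
    ∀ p ∈ U,
      pth (fun t θ => Real.sin t * Real.sin θ / ((E t θ).re) ^ 2
            * pth (fun t θ => (E t θ).im) t θ) p.1 p.2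
        = pt (fun t θ => Real.sin t * Real.sin θ / ((E t θ).re) ^ 2
            * pt (fun t θ => (E t θ).im) t θ) p.1 p.2 := by
  rintro ⟨t, θ⟩ hp
  obtain ⟨ht, hθ⟩ := hUsub hp
  obtain ⟨ht0, htπ⟩ := ht
  obtain ⟨hθ0, hθπ⟩ := hθ
  have hst : 0 < Real.sin t := Real.sin_pos_of_pos_of_lt_pi ht0 htπ
  have hsθ : 0 < Real.sin θ := Real.sin_pos_of_pos_of_lt_pi hθ0 hθπ
  have hf0 : 0 < (E t θ).re := hf (t, θ) hp
  obtain ⟨ε, hε, hball⟩ := Metric.isOpen_iff.1 hU _ hp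
  -- the two slices
  set gt : ℝ → ℂ := fun s => E s θ with hgt_def
  set gθ : ℝ → ℂ := fun x => E t x with hgθ_def
  have hmemt : ∀ s ∈ Metric.ball t ε, ((s, θ) : ℝ × ℝ) ∈ U := by
    intro s hs
    apply hball
    rw [Metric.mem_ball] at hs ⊢
    rwa [Prod.dist_eq, dist_self, max_eq_left dist_nonneg]
  have hmemθ : ∀ x ∈ Metric.ball θ ε, ((t, x) : ℝ × ℝ) ∈ U := by
    intro x hx
    apply hball
    rw [Metric.mem_ball] at hx ⊢
    rwa [Prod.dist_eq, dist_self, max_eq_right dist_nonneg]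
  have hgt : ContDiffOn ℝ (⊤ : ℕ∞) gt (Metric.ball t ε) := by
    have := hE.comp (f := fun s : ℝ => ((s, θ) : ℝ × ℝ))
      ((contDiff_id.prodMk contDiff_const).contDiffOn) (fun s hs => hmemt s hs)
    exact this
  have hgθ : ContDiffOn ℝ (⊤ : ℕ∞) gθ (Metric.ball θ ε) := by
    have := hE.comp (f := fun x : ℝ => ((t, x) : ℝ × ℝ))
      ((contDiff_const.prodMk contDiff_id).contDiffOn) (fun x hx => hmemθ x hx)
    exact this
  obtain ⟨hret, himt, himt2, heqt⟩ :=
    slice_facts gt _ Metric.isOpen_ball hgt t (Metric.mem_ball_self hε)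
  obtain ⟨hreθ, himθ, himθ2, heqθ⟩ :=
    slice_facts gθ _ Metric.isOpen_ball hgθ θ (Metric.mem_ball_self hε)
  -- abbreviations
  set F : ℝ := (E t θ).re with hF_def
  set Ft : ℝ := (deriv gt t).re
  set Fθ : ℝ := (deriv gθ θ).re
  set Bt1 : ℝ := (deriv gt t).im
  set Bθ1 : ℝ := (deriv gθ θ).im
  set Bt2 : ℝ := (deriv (deriv gt) t).im
  set Bθ2 : ℝ := (deriv (deriv gθ) θ).im
  -- imaginary part of the Ernst equation
  have hernst := hErnst (t, θ) hp
  unfold ErnstEq at hernst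
  have e1 : ptc E t θ = deriv gt t := rfl
  have e2 : pthc E t θ = deriv gθ θ := rfl
  have e3 : ptc (ptc E) t θ = deriv (deriv gt) t := rfl
  have e4 : pthc (pthc E) t θ = deriv (deriv gθ) θ := rfl
  rw [e1, e2, e3, e4] at hernst
  have him : F * (-Bt2 - (Real.cos t / Real.sin t) * Bt1 + Bθ2
        + (Real.cos θ / Real.sin θ) * Bθ1)
      = -(2*Ft*Bt1) + 2*Fθ*Bθ1 := by
    have := congrArg Complex.im hernst
    simp only [Complex.mul_im, Complex.add_im, Complex.add_re, Complex.sub_im, Complex.sub_re,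
      Complex.neg_im, Complex.neg_re, Complex.ofReal_re, Complex.ofReal_im, sq,
      Real.cot_eq_cos_div_sin] at this
    rw [hF_def]
    linear_combination this
  -- derivative computations
  have hsin_t : HasDerivAt (fun x => Real.sin t * Real.sin x) (Real.sin t * Real.cos θ) θ :=
    (Real.hasDerivAt_sin θ).const_mul _
  have hsin_θ : HasDerivAt (fun s => Real.sin s * Real.sin θ) (Real.cos t * Real.sin θ) t :=
    (Real.hasDerivAt_sin t).mul_const _
  have hpowθ : HasDerivAt (fun x => ((E t x).re)^2) (2 * F * Fθ) θ := by
    have := hreθ.pow 2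
    norm_num at this
    exact this
  have hpowt : HasDerivAt (fun s => ((E s θ).re)^2) (2 * F * Ft) t := by
    have := hret.pow 2
    norm_num at this
    exact this
  have hF2 : ((E t θ).re)^2 ≠ 0 := pow_ne_zero 2 hf0.ne'
  have hDθ : HasDerivAt
      (fun x => Real.sin t * Real.sin x / ((E t x).re)^2 * deriv (fun y => (E t y).im) x)
      ((Real.sin t * Real.cos θ * F^2 - Real.sin t * Real.sin θ * (2*F*Fθ))/(F^2)^2
          * deriv (fun y => (E t y).im) θ
        + Real.sin t * Real.sin θ / F^2 * Bθ2) θ :=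
    (hsin_t.div hpowθ hF2).mul himθ2
  have hDt : HasDerivAt
      (fun s => Real.sin s * Real.sin θ / ((E s θ).re)^2 * deriv (fun u => (E u θ).im) s)
      ((Real.cos t * Real.sin θ * F^2 - Real.sin t * Real.sin θ * (2*F*Ft))/(F^2)^2
          * deriv (fun u => (E u θ).im) t
        + Real.sin t * Real.sin θ / F^2 * Bt2) t :=
    (hsin_θ.div hpowt hF2).mul himt2
  show deriv (fun x => Real.sin t * Real.sin x / ((E t x).re)^2
        * deriv (fun y => (E t y).im) x) θ
      = deriv (fun s => Real.sin s * Real.sin θ / ((E s θ).re)^2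
        * deriv (fun u => (E u θ).im) s) t
  rw [hDθ.deriv, hDt.deriv, heqθ, heqt]
  have := ernst_alg F (Real.sin t) (Real.sin θ) (Real.cos t) (Real.cos θ)
    Ft Fθ Bt1 Bθ1 Bt2 Bθ2 hf0.ne' hst.ne' hsθ.ne' him
  linear_combination this
end
end

section
/- Let R > 0, L, Q ∈ ℝ and let a, b, c, d ∈ ℝ with ad − bc ≠ 0. Define R̃ := |ad − bc|·R, e^{L̃} := ((a + cQ)² e^L + c² e^{−L}) / |ad − bc| (a strictly positive quantity), and Q̃ := ((a + cQ)(b + dQ) e^L + c d e^{−L}) / ((a + cQ)² e^L + c² e^{−L}). Then for all X₁, X₂ ∈ ℝ the quadratic-form identity holds: R·[ e^L·((a X₁ + b X₂) + Q·(c X₁ + d X₂))² + e^{−L}·(c X₁ + d X₂)² ] = R̃·[ e^{L̃}·(X₁ + Q̃ X₂)² + e^{−L̃}·X₂² ]. -/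
noncomputable section

open Real

/-! The Gowdy form has Gram matrix of determinant `e^L e^{-L} = 1`, so its pullback under the
linear map `(a b; c d)` has determinant `(ad - bc)²`. Completing the square in the pulled-back form
`A X₁² + 2 B X₁ X₂ + C X₂²` gives `A (X₁ + (B/A) X₂)² + ((AC - B²)/A) X₂²`, and the scaling of `R`
by `|ad - bc|` splits `A` and `(ad - bc)²/A` into the weights `e^{L̃}` and `e^{-L̃}`. -/

/-- `w` stands for `e^L`, so that `w⁻¹` is `e^{-L}`. -/
def gowdyOrbitForm (R w Q X₁ X₂ : ℝ) : ℝ :=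
  R * (w * (X₁ + Q * X₂) ^ 2 + w⁻¹ * X₂ ^ 2)

theorem weighted_lagrange_identity (α β x₁ y₁ x₂ y₂ : ℝ) :
    (x₁ ^ 2 * α + y₁ ^ 2 * β) * (x₂ ^ 2 * α + y₂ ^ 2 * β) - (x₁ * x₂ * α + y₁ * y₂ * β) ^ 2
      = α * β * (x₁ * y₂ - x₂ * y₁) ^ 2 := by
  ring

theorem sq_mul_add_sq_mul_pos {α β x y : ℝ} (hα : 0 < α) (hβ : 0 < β) (hxy : x ≠ 0 ∨ y ≠ 0) :
    0 < x ^ 2 * α + y ^ 2 * β := by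
  rcases hxy with hx | hy <;> positivity

theorem quadratic_eq_complete_square {A : ℝ} (hA : A ≠ 0) (B C X₁ X₂ : ℝ) :
    A * X₁ ^ 2 + 2 * B * X₁ * X₂ + C * X₂ ^ 2
      = A * (X₁ + B / A * X₂) ^ 2 + (A * C - B ^ 2) / A * X₂ ^ 2 := by
  field_simp
  ring

theorem gowdyOrbitForm_weight_pos {w : ℝ} (hw : 0 < w) (Q : ℝ) {a b c d : ℝ}
    (h : a * d - b * c ≠ 0) : 0 < (a + c * Q) ^ 2 * w + c ^ 2 * w⁻¹ := by
  refine sq_mul_add_sq_mul_pos hw (inv_pos.mpr hw) ?_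
  by_contra! hzero
  apply h
  linear_combination d * hzero.1 - (b + d * Q) * hzero.2

theorem gowdyOrbitForm_comp_linear (R Q : ℝ) {w a b c d : ℝ} (hw : w ≠ 0)
    (h : a * d - b * c ≠ 0) (hA : (a + c * Q) ^ 2 * w + c ^ 2 * w⁻¹ ≠ 0) (X₁ X₂ : ℝ) :
    gowdyOrbitForm R w Q (a * X₁ + b * X₂) (c * X₁ + d * X₂)
      = gowdyOrbitForm (|a * d - b * c| * R)
          (((a + c * Q) ^ 2 * w + c ^ 2 * w⁻¹) / |a * d - b * c|)
          (((a + c * Q) * (b + d * Q) * w + c * d * w⁻¹) / ((a + c * Q) ^ 2 * w + c ^ 2 * w⁻¹))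
          X₁ X₂ := by
  set A := (a + c * Q) ^ 2 * w + c ^ 2 * w⁻¹
  set B := (a + c * Q) * (b + d * Q) * w + c * d * w⁻¹
  set C := (b + d * Q) ^ 2 * w + d ^ 2 * w⁻¹
  have hdet : A * C - B ^ 2 = (a * d - b * c) ^ 2 := by
    rw [weighted_lagrange_identity, mul_inv_cancel₀ hw]
    ring
  have habs : |a * d - b * c| ≠ 0 := abs_ne_zero.mpr h
  calc gowdyOrbitForm R w Q (a * X₁ + b * X₂) (c * X₁ + d * X₂)
      = R * (A * X₁ ^ 2 + 2 * B * X₁ * X₂ + C * X₂ ^ 2) := by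
        unfold gowdyOrbitForm A B C
        ring
    _ = R * (A * (X₁ + B / A * X₂) ^ 2 + (a * d - b * c) ^ 2 / A * X₂ ^ 2) := by
        rw [quadratic_eq_complete_square hA, hdet]
    _ = _ := by
        unfold gowdyOrbitForm
        rw [← sq_abs (a * d - b * c)]
        field_simp

theorem gowdy_orbit_reparametrization_general
    (R L Q a b c d : ℝ) (h : a * d - b * c ≠ 0) :
    0 < ((a + c * Q) ^ 2 * Real.exp L + c ^ 2 * Real.exp (-L)) / |a * d - b * c| ∧
    ∀ X₁ X₂ : ℝ,
      R * (Real.exp L * ((a * X₁ + b * X₂) + Q * (c * X₁ + d * X₂)) ^ 2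
          + Real.exp (-L) * (c * X₁ + d * X₂) ^ 2)
        = (|a * d - b * c| * R) *
          ((((a + c * Q) ^ 2 * Real.exp L + c ^ 2 * Real.exp (-L)) / |a * d - b * c|)
              * (X₁ + (((a + c * Q) * (b + d * Q) * Real.exp L + c * d * Real.exp (-L))
                  / ((a + c * Q) ^ 2 * Real.exp L + c ^ 2 * Real.exp (-L))) * X₂) ^ 2
            + (((a + c * Q) ^ 2 * Real.exp L + c ^ 2 * Real.exp (-L))
                  / |a * d - b * c|)⁻¹ * X₂ ^ 2) := by
  have hA := gowdyOrbitForm_weight_pos (exp_pos L) Q h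
  rw [exp_neg]
  exact ⟨div_pos hA (abs_pos.mpr h),
    gowdyOrbitForm_comp_linear R Q (exp_pos L).ne' h hA.ne'⟩

/-- Transformation of the Gowdy orbit metric under a linear reparametrization of the
Killing orbits: the quadratic form identity. -/
theorem gowdy_orbit_reparametrization
    (R L Q a b c d : ℝ) (hR : 0 < R) (h : a * d - b * c ≠ 0) :
    0 < ((a + c * Q) ^ 2 * Real.exp L + c ^ 2 * Real.exp (-L)) / |a * d - b * c| ∧
    ∀ X₁ X₂ : ℝ,
      R * (Real.exp L * ((a * X₁ + b * X₂) + Q * (c * X₁ + d * X₂)) ^ 2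
          + Real.exp (-L) * (c * X₁ + d * X₂) ^ 2)
        = (|a * d - b * c| * R) *
          ((((a + c * Q) ^ 2 * Real.exp L + c ^ 2 * Real.exp (-L)) / |a * d - b * c|)
              * (X₁ + (((a + c * Q) * (b + d * Q) * Real.exp L + c * d * Real.exp (-L))
                  / ((a + c * Q) ^ 2 * Real.exp L + c ^ 2 * Real.exp (-L))) * X₂) ^ 2
            + (((a + c * Q) ^ 2 * Real.exp L + c ^ 2 * Real.exp (-L))
                  / |a * d - b * c|)⁻¹ * X₂ ^ 2) :=
  gowdy_orbit_reparametrization_general R L Q a b c d h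
end
end
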